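/- Let α_m be a short simple root and let w ∈ W be the unique element of minimal length l(w) = (l(s_ϑ)−1)/2 with w(ϑ) = α_m, where ϑ is the highest short root; fix any reduced decomposition w = s_{j_p}⋯s_{j_1}. Then for every 1 ≤ k ≤ p one has (s_{j_k} s_{j_{k−1}}⋯s_{j_1}(ϑ), α_{j_k}^∨) = −1; equivalently, (s_{j_{k+1}}⋯s_{j_p}(α_m), α_{j_k}^∨) = −1. -/

import Mathlib

open scoped RealInnerProductSpace Classical

noncomputable section

/-- Euclidean space ℝⁿ. -/
abbrev EV (n : ℕ) := EuclideanSpace ℝ (Fin n)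

/-- ν_α = (α,α)/2. -/
def nuu {n : ℕ} (α : EV n) : ℝ := ⟪α, α⟫ / 2

/-- α^∨ = 2α/(α,α). -/
def coroot {n : ℕ} (α : EV n) : EV n := (2 / ⟪α, α⟫) • α

/-- the reflection s_α. -/
def srefl {n : ℕ} (α : EV n) : EV n → EV n :=
  fun z => z - (2 * ⟪z, α⟫ / ⟪α, α⟫) • α

/-- the affine reflection s_ã attached to ã = [α, ν_α j], acting linearly on ℝⁿ × ℝ. -/
def aRefl {n : ℕ} (p : EV n × ℝ) : EV n × ℝ → EV n × ℝ :=
  fun z => z - (2 * ⟪z.1, p.1⟫ / ⟪p.1, p.1⟫) • p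

/-- the translation element b' ∈ Ŵ, b'([z,ζ]) = [z, ζ − (z,b)]. -/
def transl {n : ℕ} (b : EV n) : EV n × ℝ → EV n × ℝ :=
  fun z => (z.1, z.2 - ⟪z.1, b⟫)

/-- extension of a nonaffine transformation to ℝⁿ × ℝ. -/
def affExt {n : ℕ} (w : EV n → EV n) : EV n × ℝ → EV n × ℝ :=
  fun z => (w z.1, z.2)

/-- An irreducible reduced crystallographic root system in ℝⁿ, with a fixed system of
positive/simple roots, normalized so that (α,α) = 2 for short roots; `hishort` is the
highest short root ϑ and `hiroot` the highest root θ. -/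
structure RootCtx (n : ℕ) where
  R : Finset (EV n)
  pos : Finset (EV n)
  simple : Fin n → EV n
  hishort : EV n
  hiroot : EV n
  nonzero : ∀ α ∈ R, α ≠ (0 : EV n)
  neg_mem : ∀ α ∈ R, -α ∈ R
  reduced : ∀ α ∈ R, ∀ t : ℝ, t • α ∈ R → t = 1 ∨ t = -1
  crys : ∀ α ∈ R, ∀ β ∈ R, ∃ m : ℤ, 2 * ⟪β, α⟫ / ⟪α, α⟫ = (m : ℝ)
  reflect_mem : ∀ α ∈ R, ∀ β ∈ R, β - (2 * ⟪β, α⟫ / ⟪α, α⟫) • α ∈ R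
  span_top : Submodule.span ℝ (R : Set (EV n)) = ⊤
  pos_subset : pos ⊆ R
  pos_iff : ∀ α ∈ R, (α ∈ pos ↔ -α ∉ pos)
  simple_pos : ∀ i, simple i ∈ pos
  simple_inj : Function.Injective simple
  pos_sum : ∀ α ∈ pos, ∃ f : Fin n → ℕ, α = ∑ i, (f i : ℝ) • simple i
  irred : ∀ S : Finset (EV n), S ⊆ R → S.Nonempty →
      (∀ α ∈ S, ∀ β ∈ R, β ∉ S → ⟪α, β⟫ = 0) → S = R
  normalized : ∀ α ∈ R, (∀ β ∈ R, ⟪α, α⟫ ≤ ⟪β, β⟫) → ⟪α, α⟫ = 2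
  hishort_pos : hishort ∈ pos
  hishort_short : ⟪hishort, hishort⟫ = 2
  hishort_high : ∀ α ∈ R, ⟪α, α⟫ = 2 →
      ∃ f : Fin n → ℕ, hishort - α = ∑ i, (f i : ℝ) • simple i
  hiroot_pos : hiroot ∈ pos
  hiroot_high : ∀ α ∈ R, ∃ f : Fin n → ℕ, hiroot - α = ∑ i, (f i : ℝ) • simple i

namespace RootCtx

variable {n : ℕ} (c : RootCtx n)

/-- word in the simple reflections of W; the letters are listed in the order of
application (the first letter of the list acts first), so `[i₁, …, i_l]`
represents s_{i_l} ⋯ s_{i_1}. -/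
def wWord (L : List (Fin n)) : EV n → EV n :=
  L.foldl (fun f i => srefl (c.simple i) ∘ f) id

/-- membership in the Weyl group W. -/
def IsWeyl (w : EV n → EV n) : Prop := ∃ L : List (Fin n), w = c.wWord L

/-- λ(w) = {α ∈ R₊ : w(α) ∈ R₋}. -/
def lamW (w : EV n → EV n) : Finset (EV n) :=
  c.pos.filter (fun α => -(w α) ∈ c.pos)

/-- λ_ν(w). -/
def lamWnu (w : EV n → EV n) (ν : ℝ) : Finset (EV n) :=
  (c.lamW w).filter (fun α => nuu α = ν)

/-- the length l(w) = |λ(w)| of w ∈ W. -/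
def lenW (w : EV n → EV n) : ℕ := (c.lamW w).card

/-- ρ_ν = (1/2) Σ_{α ∈ R₊, ν_α = ν} α. -/
def rho (ν : ℝ) : EV n :=
  (1 / 2 : ℝ) • ∑ α ∈ c.pos.filter (fun α => nuu α = ν), α

/-- ρ_ν^∨ = ρ_ν / ν. -/
def rhoCheck (ν : ℝ) : EV n := ν⁻¹ • c.rho ν

/-- the affine root system R̃ ⊂ ℝⁿ × ℝ. -/
def aR : Set (EV n × ℝ) := {p | ∃ α ∈ c.R, ∃ j : ℤ, p = (α, nuu α * j)}

/-- positive affine roots. -/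
def aPos : Set (EV n × ℝ) :=
  {p | p ∈ c.aR ∧ (0 < p.2 ∨ (p.2 = 0 ∧ p.1 ∈ c.pos))}

/-- negative affine roots. -/
def aNeg : Set (EV n × ℝ) := {p | -p ∈ c.aPos}

/-- the affine simple roots α_0, α_1, …, α_n; the index 0 corresponds to
α₀ = [−ϑ, 1]. -/
def asimple : Fin (n + 1) → EV n × ℝ :=
  fun i => if h : i = 0 then (-c.hishort, (1 : ℝ)) else (c.simple (i.pred h), (0 : ℝ))

/-- the affine simple reflections s_0, s_1, …, s_n. -/
def aS (i : Fin (n + 1)) : EV n × ℝ → EV n × ℝ := aRefl (c.asimple i)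

/-- word in the affine simple reflections (letters in order of application). -/
def affWord (L : List (Fin (n + 1))) : EV n × ℝ → EV n × ℝ :=
  L.foldl (fun f i => c.aS i ∘ f) id

/-- the weight lattice P. -/
def PwSet : Set (EV n) :=
  {b | ∀ i, ∃ m : ℤ, 2 * ⟪b, c.simple i⟫ / ⟪c.simple i, c.simple i⟫ = (m : ℝ)}

/-- the dominant weights P₊. -/
def PplusSet : Set (EV n) :=
  {b | b ∈ c.PwSet ∧ ∀ i, 0 ≤ ⟪b, c.simple i⟫}

/-- membership in the extended affine Weyl group Ŵ = W ⋉ P,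
via the normal form w·b' with w ∈ W and b ∈ P. -/
def IsExtW (f : EV n × ℝ → EV n × ℝ) : Prop :=
  ∃ w b, c.IsWeyl w ∧ b ∈ c.PwSet ∧ f = affExt w ∘ transl b

/-- membership in Π = {π ∈ Ŵ : π(R̃₊) = R̃₊}. -/
def IsPi (f : EV n × ℝ → EV n × ℝ) : Prop :=
  c.IsExtW f ∧ f '' c.aPos = c.aPos

/-- the λ-set λ(ŵ) = R̃₊ ∩ ŵ⁻¹(R̃₋) of an affine transformation. -/
def aLam (f : EV n × ℝ → EV n × ℝ) : Set (EV n × ℝ) :=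
  {p | p ∈ c.aPos ∧ f p ∈ c.aNeg}

/-- the ν-part λ_ν(ŵ). -/
def aLamNu (f : EV n × ℝ → EV n × ℝ) (ν : ℝ) : Set (EV n × ℝ) :=
  {p | p ∈ c.aLam f ∧ nuu p.1 = ν}

/-- the length l(ŵ) = |λ(ŵ)|. -/
def aLen (f : EV n × ℝ → EV n × ℝ) : ℕ := (c.aLam f).ncard

/-- `(π, L)` is a reduced decomposition ŵ = π_r s_{i_l} ⋯ s_{i_1}: π ∈ Π and
the word length is minimal among all such presentations of the same element. -/
def IsReducedA (π : EV n × ℝ → EV n × ℝ) (L : List (Fin (n + 1))) : Prop :=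
  c.IsPi π ∧
    ∀ (π' : EV n × ℝ → EV n × ℝ) (L' : List (Fin (n + 1))),
      c.IsPi π' → π' ∘ c.affWord L' = π ∘ c.affWord L → L.length ≤ L'.length

/-- the λ-sequence α̃¹, α̃², … of a word (0-based indexing):
α̃^{k+1} = s_{i_1} s_{i_2} ⋯ s_{i_k}(α_{i_{k+1}}). -/
def lamSeq (L : List (Fin (n + 1))) (k : Fin L.length) : EV n × ℝ :=
  ((L.take k).foldr (fun i f => c.aS i ∘ f) id) (c.asimple (L.get k))

/-- the λ-sequence of a word in W (0-based indexing). -/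
def lamSeqW (L : List (Fin n)) (k : Fin L.length) : EV n :=
  ((L.take k).foldr (fun i f => srefl (c.simple i) ∘ f) id) (c.simple (L.get k))

end RootCtx

/-!
Write β = s_{j_{k-1}} ⋯ s_{j_1}(ϑ) and a = j_k. Since s_a negates the pairing with α_a^∨, it
suffices to show (β, α_a^∨) = 1, and this pairing is an integer. It is nonnegative: the word is
reduced, so γ = (s_{j_{k-1}} ⋯ s_{j_1})⁻¹(α_a) is a positive root, and (β, α_a) = (ϑ, γ) ≥ 0
because ϑ is dominant. It is nonzero, for otherwise s_a fixes β and deleting the letter j_k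
gives a shorter word sending ϑ to α_m. It is less than 2: by Cauchy–Schwarz a pairing ≥ 2 of
the short root β with a root forces β = α_a, and then
s_ϑ = (s_{j_{k-1}} ⋯ s_{j_1})⁻¹ s_a (s_{j_{k-1}} ⋯ s_{j_1}) has length at most 2k - 1 < l(s_ϑ).
-/

section Reflection

variable {n : ℕ}

theorem srefl_eq_reflection (α : EV n) : srefl α = ⇑(ℝ ∙ α)ᗮ.reflection := by
  funext x
  rw [Submodule.reflection_orthogonal_apply, Submodule.reflection_singleton_apply, srefl,
    RCLike.ofReal_real_eq_id, id, ← real_inner_self_eq_norm_sq, real_inner_comm, two_smul,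
    ← add_smul, neg_sub, ← two_mul, mul_div_assoc]

theorem srefl_srefl (α x : EV n) : srefl α (srefl α x) = x := by
  simp [srefl_eq_reflection]

theorem srefl_self (α : EV n) : srefl α α = -α := by
  rw [srefl_eq_reflection, Submodule.reflection_orthogonalComplement_singleton_eq_neg]

theorem srefl_neg (α x : EV n) : srefl α (-x) = -srefl α x := by
  rw [srefl_eq_reflection, map_neg]

theorem inner_coroot (x α : EV n) : ⟪x, coroot α⟫ = 2 * ⟪x, α⟫ / ⟪α, α⟫ := by
  rw [coroot, real_inner_smul_right]; ring

theorem srefl_apply (α x : EV n) : srefl α x = x - ⟪x, coroot α⟫ • α := by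
  rw [inner_coroot]; rfl

theorem inner_self_coroot {α : EV n} (hα : α ≠ 0) : ⟪α, coroot α⟫ = 2 := by
  rw [inner_coroot, mul_div_assoc, div_self (inner_self_ne_zero.mpr hα), mul_one]

theorem inner_srefl_coroot {α : EV n} (hα : α ≠ 0) (x : EV n) :
    ⟪srefl α x, coroot α⟫ = -⟪x, coroot α⟫ := by
  rw [srefl_apply, inner_sub_left, real_inner_smul_left, inner_self_coroot hα]; ring

theorem inner_coroot_nonneg_iff {α : EV n} (hα : α ≠ 0) {x : EV n} :
    0 ≤ ⟪x, coroot α⟫ ↔ 0 ≤ ⟪x, α⟫ := by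
  have : 0 < ⟪α, α⟫ := real_inner_self_pos.mpr hα
  rw [coroot, real_inner_smul_right, mul_nonneg_iff_of_pos_left (by positivity)]

theorem srefl_eq_self {α x : EV n} (h : ⟪x, coroot α⟫ = 0) : srefl α x = x := by
  rw [srefl_apply, h, zero_smul, sub_zero]

theorem eq_of_inner_self_le_of_two_le_inner_coroot {x y : EV n} (hle : ⟪x, x⟫ ≤ ⟪y, y⟫)
    (h2 : 2 ≤ ⟪x, coroot y⟫) : x = y := by
  rw [inner_coroot] at h2
  have hY : 0 < ⟪y, y⟫ := by
    refine (real_inner_self_nonneg (x := y)).lt_of_ne fun h => ?_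
    rw [← h, div_zero] at h2
    norm_num at h2
  have hxy : ⟪y, y⟫ ≤ ⟪x, y⟫ := by
    rw [le_div_iff₀ hY] at h2
    linarith
  have hcs := real_inner_mul_inner_self_le x y
  have hxy' : ⟪x, y⟫ = ⟪y, y⟫ := by nlinarith
  have hxx : ⟪x, x⟫ = ⟪y, y⟫ := by nlinarith
  rw [← sub_eq_zero, ← inner_self_eq_zero (𝕜 := ℝ), inner_sub_left, inner_sub_right,
    inner_sub_right, real_inner_comm x y]
  linarith

theorem LinearIsometryEquiv.map_srefl (e : EV n ≃ₗᵢ[ℝ] EV n) (α x : EV n) :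
    e (srefl α x) = srefl (e α) (e x) := by
  simp only [srefl, map_sub, map_smul, LinearIsometryEquiv.inner_map_map]

end Reflection

namespace RootCtx

variable {n : ℕ} (c : RootCtx n)

theorem simple_mem_R (i : Fin n) : c.simple i ∈ c.R := c.pos_subset (c.simple_pos i)

theorem simple_ne_zero (i : Fin n) : c.simple i ≠ 0 := c.nonzero _ (c.simple_mem_R i)

theorem hishort_mem_R : c.hishort ∈ c.R := c.pos_subset c.hishort_pos

section Words

theorem wWord_nil : c.wWord [] = id := rfl

theorem foldl_srefl_comp (L : List (Fin n)) (g : EV n → EV n) :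
    L.foldl (fun f i => srefl (c.simple i) ∘ f) g = c.wWord L ∘ g := by
  induction L generalizing g with
  | nil => rfl
  | cons i L ih =>
    rw [wWord, List.foldl_cons, List.foldl_cons, ih, ih]
    rfl

theorem wWord_append (L M : List (Fin n)) : c.wWord (L ++ M) = c.wWord M ∘ c.wWord L := by
  rw [wWord, List.foldl_append, foldl_srefl_comp]
  rfl

theorem wWord_cons (i : Fin n) (L : List (Fin n)) :
    c.wWord (i :: L) = c.wWord L ∘ srefl (c.simple i) :=
  c.wWord_append [i] L

theorem wWord_concat (L : List (Fin n)) (i : Fin n) :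
    c.wWord (L ++ [i]) = srefl (c.simple i) ∘ c.wWord L :=
  c.wWord_append L [i]

theorem exists_wWord_eq_linearIsometryEquiv (L : List (Fin n)) :
    ∃ e : EV n ≃ₗᵢ[ℝ] EV n, c.wWord L = ⇑e := by
  induction L with
  | nil => exact ⟨LinearIsometryEquiv.refl ℝ _, rfl⟩
  | cons i L ih =>
    obtain ⟨e, he⟩ := ih
    refine ⟨(ℝ ∙ c.simple i)ᗮ.reflection.trans e, ?_⟩
    rw [wWord_cons, he, srefl_eq_reflection]
    rfl

theorem wWord_neg (L : List (Fin n)) (x : EV n) : c.wWord L (-x) = -c.wWord L x := by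
  obtain ⟨e, he⟩ := c.exists_wWord_eq_linearIsometryEquiv L
  rw [he, map_neg]

theorem inner_wWord_wWord (L : List (Fin n)) (x y : EV n) :
    ⟪c.wWord L x, c.wWord L y⟫ = ⟪x, y⟫ := by
  obtain ⟨e, he⟩ := c.exists_wWord_eq_linearIsometryEquiv L
  rw [he, LinearIsometryEquiv.inner_map_map]

theorem wWord_srefl (L : List (Fin n)) (α x : EV n) :
    c.wWord L (srefl α x) = srefl (c.wWord L α) (c.wWord L x) := by
  obtain ⟨e, he⟩ := c.exists_wWord_eq_linearIsometryEquiv L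
  rw [he, e.map_srefl]

theorem wWord_reverse_wWord (L : List (Fin n)) (x : EV n) :
    c.wWord L.reverse (c.wWord L x) = x := by
  induction L generalizing x with
  | nil => rfl
  | cons i L ih =>
    rw [List.reverse_cons, c.wWord_concat, c.wWord_cons, Function.comp_apply,
      Function.comp_apply, ih, srefl_srefl]

theorem wWord_wWord_reverse (L : List (Fin n)) (x : EV n) :
    c.wWord L (c.wWord L.reverse x) = x := by
  simpa using c.wWord_reverse_wWord L.reverse x

theorem wWord_mem_R (L : List (Fin n)) {α : EV n} (h : α ∈ c.R) : c.wWord L α ∈ c.R := by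
  induction L generalizing α with
  | nil => exact h
  | cons i L ih =>
    rw [wWord_cons]
    exact ih (c.reflect_mem _ (c.simple_mem_R i) _ h)

theorem wWord_take_succ (L : List (Fin n)) {k : ℕ} (hk : k < L.length) :
    c.wWord (L.take (k + 1)) = srefl (c.simple L[k]) ∘ c.wWord (L.take k) := by
  rw [List.take_succ_eq_append_getElem hk, wWord_concat]

theorem wWord_reverse_drop_wWord (L : List (Fin n)) (k : ℕ) (x : EV n) :
    c.wWord (L.drop k).reverse (c.wWord L x) = c.wWord (L.take k) x := by
  nth_rewrite 2 [← List.take_append_drop k L]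
  rw [wWord_append, Function.comp_apply, wWord_reverse_wWord]

end Words

section Roots

theorem mem_pos_or_neg_mem_pos {α : EV n} (h : α ∈ c.R) : α ∈ c.pos ∨ -α ∈ c.pos := by
  rw [or_iff_not_imp_left]
  intro hα
  exact (c.pos_iff (-α) (c.neg_mem α h)).mpr (by rwa [neg_neg])

theorem neg_notMem_pos {α : EV n} (h : α ∈ c.pos) : -α ∉ c.pos :=
  (c.pos_iff α (c.pos_subset h)).mp h

theorem two_le_inner_self {α : EV n} (h : α ∈ c.R) : 2 ≤ ⟪α, α⟫ := by
  obtain ⟨β, hβ, hmin⟩ :=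
    Finset.exists_min_image c.R (fun γ => ⟪γ, γ⟫) ⟨c.hishort, c.hishort_mem_R⟩
  exact c.normalized β hβ hmin ▸ hmin α h

theorem linearIndependent_simple : LinearIndependent ℝ c.simple := by
  refine linearIndependent_of_top_le_span_of_card_eq_finrank ?_ (by simp)
  rw [← c.span_top, Submodule.span_le]
  have hpos : ∀ β ∈ c.pos, β ∈ Submodule.span ℝ (Set.range c.simple) := by
    intro β hβ
    obtain ⟨f, rfl⟩ := c.pos_sum β hβ
    exact Submodule.sum_mem _ fun i _ =>
      Submodule.smul_mem _ _ (Submodule.subset_span ⟨i, rfl⟩)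
  intro α hα
  rcases c.mem_pos_or_neg_mem_pos hα with h | h
  · exact hpos α h
  · simpa using Submodule.neg_mem _ (hpos _ h)

theorem exists_int_inner_coroot {α β : EV n} (hα : α ∈ c.R) (hβ : β ∈ c.R) :
    ∃ z : ℤ, ⟪β, coroot α⟫ = z := by
  simpa only [inner_coroot] using c.crys α hα β hβ

theorem coeff_eq_of_sum_eq_smul_simple {f : Fin n → ℝ} {t : ℝ} {i : Fin n}
    (h : ∑ j, f j • c.simple j = t • c.simple i) (j : Fin n) :
    f j = (Pi.single i t : Fin n → ℝ) j := by
  refine Fintype.linearIndependent_iffₛ.mp c.linearIndependent_simple _ _ ?_ j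
  simpa [Pi.single_apply, ite_smul] using h

theorem eq_simple_of_mem_pos_of_eq_smul {β : EV n} {t : ℝ} {i : Fin n} (hβ : β ∈ c.pos)
    (h : β = t • c.simple i) : β = c.simple i := by
  rcases c.reduced _ (c.simple_mem_R i) t (h ▸ c.pos_subset hβ) with rfl | rfl
  · rwa [one_smul] at h
  · rw [h, neg_one_smul] at hβ
    exact absurd hβ (c.neg_notMem_pos (c.simple_pos i))

theorem inner_hishort_simple_nonneg (i : Fin n) : 0 ≤ ⟪c.hishort, c.simple i⟫ := by
  have hR : srefl (c.simple i) c.hishort ∈ c.R :=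
    c.reflect_mem _ (c.simple_mem_R i) _ c.hishort_mem_R
  have hshort : ⟪srefl (c.simple i) c.hishort, srefl (c.simple i) c.hishort⟫ = 2 := by
    rw [srefl_eq_reflection, LinearIsometryEquiv.inner_map_map, c.hishort_short]
  obtain ⟨f, hf⟩ := c.hishort_high _ hR hshort
  rw [srefl_apply, sub_sub_cancel] at hf
  have hcoeff := c.coeff_eq_of_sum_eq_smul_simple hf.symm i
  rw [Pi.single_eq_same] at hcoeff
  rw [← inner_coroot_nonneg_iff (c.simple_ne_zero i), ← hcoeff]
  exact Nat.cast_nonneg _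

theorem inner_hishort_nonneg_of_mem_pos {β : EV n} (h : β ∈ c.pos) :
    0 ≤ ⟪c.hishort, β⟫ := by
  obtain ⟨f, rfl⟩ := c.pos_sum β h
  rw [inner_sum]
  refine Finset.sum_nonneg fun i _ => ?_
  rw [real_inner_smul_right]
  exact mul_nonneg (Nat.cast_nonneg _) (c.inner_hishort_simple_nonneg i)

theorem srefl_simple_mem_pos {β : EV n} {i : Fin n} (hβ : β ∈ c.pos) (hne : β ≠ c.simple i) :
    srefl (c.simple i) β ∈ c.pos := by
  have hR : srefl (c.simple i) β ∈ c.R :=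
    c.reflect_mem _ (c.simple_mem_R i) _ (c.pos_subset hβ)
  refine (c.mem_pos_or_neg_mem_pos hR).resolve_right fun hneg => hne ?_
  obtain ⟨f, hf⟩ := c.pos_sum β hβ
  obtain ⟨g, hg⟩ := c.pos_sum _ hneg
  have hsum :
      ∑ j, ((f j : ℝ) + g j) • c.simple j = ⟪β, coroot (c.simple i)⟫ • c.simple i := by
    simp only [add_smul, Finset.sum_add_distrib, ← hf, ← hg, srefl_apply]
    abel
  refine c.eq_simple_of_mem_pos_of_eq_smul hβ (t := f i) ?_
  rw [hf, Fintype.sum_eq_single i]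
  intro j hj
  have hcoeff := c.coeff_eq_of_sum_eq_smul_simple hsum j
  rw [Pi.single_eq_of_ne hj] at hcoeff
  have hfj : f j = 0 := by
    norm_cast at hcoeff
    omega
  rw [hfj, Nat.cast_zero, zero_smul]

theorem eq_simple_or_of_neg_srefl_mem_pos {δ : EV n} {a : Fin n} (hδ : δ ∈ c.R)
    (h : -srefl (c.simple a) δ ∈ c.pos) :
    δ = c.simple a ∨ (-δ ∈ c.pos ∧ δ ≠ -c.simple a) := by
  rcases c.mem_pos_or_neg_mem_pos hδ with hpos | hneg
  · left
    by_contra hne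
    exact c.neg_notMem_pos (c.srefl_simple_mem_pos hpos hne) h
  · refine Or.inr ⟨hneg, ?_⟩
    rintro rfl
    rw [srefl_neg, srefl_self, neg_neg] at h
    exact c.neg_notMem_pos (c.simple_pos a) h

end Roots

section Length

theorem lenW_id : c.lenW id = 0 := by
  rw [lenW, Finset.card_eq_zero, lamW, Finset.filter_eq_empty_iff]
  exact fun α hα => c.neg_notMem_pos hα

theorem mem_lamW_srefl_comp {M : List (Fin n)} {a : Fin n} {α : EV n}
    (h : α ∈ c.lamW (srefl (c.simple a) ∘ c.wWord M)) :
    α = c.wWord M.reverse (c.simple a) ∨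
      (α ∈ c.lamW (c.wWord M) ∧ α ≠ -c.wWord M.reverse (c.simple a)) := by
  rw [lamW, Finset.mem_filter, Function.comp_apply] at h
  obtain ⟨hα, hneg⟩ := h
  rcases c.eq_simple_or_of_neg_srefl_mem_pos (c.wWord_mem_R M (c.pos_subset hα)) hneg with
    heq | ⟨hneg', hne⟩
  · left
    rw [← heq, wWord_reverse_wWord]
  · refine Or.inr ⟨Finset.mem_filter.mpr ⟨hα, hneg'⟩, ?_⟩
    rintro rfl
    rw [wWord_neg, wWord_wWord_reverse] at hne
    exact hne rfl

theorem lenW_srefl_comp_le (M : List (Fin n)) (a : Fin n) :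
    c.lenW (srefl (c.simple a) ∘ c.wWord M) ≤ c.lenW (c.wWord M) + 1 := by
  refine (Finset.card_le_card fun α hα => ?_).trans (Finset.card_insert_le
    (c.wWord M.reverse (c.simple a)) _)
  rcases c.mem_lamW_srefl_comp hα with h | ⟨h, -⟩
  · exact h ▸ Finset.mem_insert_self _ _
  · exact Finset.mem_insert_of_mem h

theorem lenW_srefl_comp_lt {M : List (Fin n)} {a : Fin n}
    (h : c.wWord M.reverse (c.simple a) ∉ c.pos) :
    c.lenW (srefl (c.simple a) ∘ c.wWord M) < c.lenW (c.wWord M) := by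
  have hmem : -c.wWord M.reverse (c.simple a) ∈ c.lamW (c.wWord M) := by
    refine Finset.mem_filter.mpr
      ⟨(c.mem_pos_or_neg_mem_pos (c.wWord_mem_R _ (c.simple_mem_R a))).resolve_left h, ?_⟩
    rw [wWord_neg, wWord_wWord_reverse, neg_neg]
    exact c.simple_pos a
  refine (Finset.card_le_card fun α hα => ?_).trans_lt (Finset.card_erase_lt_of_mem hmem)
  rcases c.mem_lamW_srefl_comp hα with rfl | ⟨hα', hne⟩
  · exact absurd (Finset.mem_filter.mp hα).1 h
  · exact Finset.mem_erase.mpr ⟨hne, hα'⟩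

theorem lenW_wWord_append_le (N M : List (Fin n)) :
    c.lenW (c.wWord (N ++ M)) ≤ c.lenW (c.wWord N) + M.length := by
  induction M using List.reverseRecOn with
  | nil => simp
  | append_singleton M a ih =>
    rw [← List.append_assoc, wWord_concat, List.length_append, List.length_singleton]
    linarith [c.lenW_srefl_comp_le (N ++ M) a]

theorem lenW_wWord_le_length (M : List (Fin n)) : c.lenW (c.wWord M) ≤ M.length := by
  simpa [wWord_nil, lenW_id] using c.lenW_wWord_append_le [] M

theorem wWord_reverse_take_simple_mem_pos {L : List (Fin n)}
    (hred : L.length = c.lenW (c.wWord L)) {k : ℕ} (hk : k < L.length) :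
    c.wWord (L.take k).reverse (c.simple L[k]) ∈ c.pos := by
  by_contra h
  have hdrop := c.lenW_srefl_comp_lt h
  rw [← wWord_take_succ _ _ hk] at hdrop
  have htake := c.lenW_wWord_le_length (L.take k)
  have hsplit := c.lenW_wWord_append_le (L.take (k + 1)) (L.drop (k + 1))
  rw [List.take_append_drop, List.length_drop] at hsplit
  rw [List.length_take] at htake
  omega

end Length

section HighestShortRoot

theorem srefl_hishort_eq_wWord {M : List (Fin n)} {a : Fin n}
    (h : c.wWord M c.hishort = c.simple a) : srefl c.hishort = c.wWord (M ++ a :: M.reverse) := by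
  funext x
  rw [wWord_append, wWord_cons, Function.comp_apply, Function.comp_apply, ← h, ← wWord_srefl,
    wWord_reverse_wWord]

theorem lenW_srefl_hishort_le {M : List (Fin n)} {a : Fin n}
    (h : c.wWord M c.hishort = c.simple a) : c.lenW (srefl c.hishort) ≤ 2 * M.length + 1 := by
  rw [c.srefl_hishort_eq_wWord h]
  refine (c.lenW_wWord_le_length _).trans_eq ?_
  simp only [List.length_append, List.length_cons, List.length_reverse]
  ring

theorem inner_wWord_take_coroot_nonneg {L : List (Fin n)}
    (hred : L.length = c.lenW (c.wWord L)) {k : ℕ} (hk : k < L.length) :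
    0 ≤ ⟪c.wWord (L.take k) c.hishort, coroot (c.simple L[k])⟫ := by
  rw [inner_coroot_nonneg_iff (c.simple_ne_zero _),
    ← c.wWord_wWord_reverse (L.take k) (c.simple L[k]), inner_wWord_wWord]
  exact c.inner_hishort_nonneg_of_mem_pos (c.wWord_reverse_take_simple_mem_pos hred hk)

theorem inner_wWord_take_coroot_ne_zero {L : List (Fin n)} {x : EV n}
    (hmin : ∀ M : List (Fin n), c.wWord M x = c.wWord L x → L.length ≤ M.length)
    {k : ℕ} (hk : k < L.length) :
    ⟪c.wWord (L.take k) x, coroot (c.simple L[k])⟫ ≠ 0 := by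
  intro h0
  have hdel : c.wWord (L.take k ++ L.drop (k + 1)) x = c.wWord L x := by
    rw [wWord_append, Function.comp_apply, ← srefl_eq_self h0,
      ← Function.comp_apply (f := srefl _), ← wWord_take_succ _ _ hk,
      ← Function.comp_apply (f := c.wWord (L.drop (k + 1))), ← wWord_append,
      List.take_append_drop]
  have hlen := hmin _ hdel
  rw [List.length_append, List.length_take, List.length_drop] at hlen
  omega

theorem inner_wWord_take_coroot_lt_two {L : List (Fin n)}
    (hlen : 2 * L.length + 1 ≤ c.lenW (srefl c.hishort)) {k : ℕ} (hk : k < L.length) :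
    ⟪c.wWord (L.take k) c.hishort, coroot (c.simple L[k])⟫ < 2 := by
  by_contra! h2
  have hle : ⟪c.wWord (L.take k) c.hishort, c.wWord (L.take k) c.hishort⟫ ≤
      ⟪c.simple L[k], c.simple L[k]⟫ := by
    rw [inner_wWord_wWord, c.hishort_short]
    exact c.two_le_inner_self (c.simple_mem_R _)
  have hword := c.lenW_srefl_hishort_le (eq_of_inner_self_le_of_two_le_inner_coroot hle h2)
  rw [List.length_take] at hword
  omega

theorem inner_wWord_take_coroot_eq_one {L : List (Fin n)}
    (hred : L.length = c.lenW (c.wWord L))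
    (hmin : ∀ M : List (Fin n), c.wWord M c.hishort = c.wWord L c.hishort → L.length ≤ M.length)
    (hlen : 2 * L.length + 1 ≤ c.lenW (srefl c.hishort)) {k : ℕ} (hk : k < L.length) :
    ⟪c.wWord (L.take k) c.hishort, coroot (c.simple L[k])⟫ = 1 := by
  obtain ⟨z, hz⟩ := c.exists_int_inner_coroot (c.simple_mem_R L[k])
    (c.wWord_mem_R (L.take k) c.hishort_mem_R)
  have hnonneg := c.inner_wWord_take_coroot_nonneg hred hk
  have hne := c.inner_wWord_take_coroot_ne_zero hmin hk
  have hlt := c.inner_wWord_take_coroot_lt_two hlen hk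
  rw [hz] at hnonneg hne hlt ⊢
  norm_cast at hnonneg hne hlt ⊢
  omega

end HighestShortRoot

end RootCtx

open RootCtx in
theorem minimal_word_pairing_neg_one_general {n : ℕ} (c : RootCtx n)
    (m : Fin n)
    (L : List (Fin n))
    (hw : c.wWord L c.hishort = c.simple m)
    (hred : L.length = c.lenW (c.wWord L))
    (hlen : 2 * L.length + 1 = c.lenW (srefl c.hishort))
    (hmin : ∀ v, c.IsWeyl v → v c.hishort = c.simple m →
      c.lenW (c.wWord L) ≤ c.lenW v) :
    ∀ k : Fin L.length,
      ⟪c.wWord (L.take (k + 1)) c.hishort, coroot (c.simple (L.get k))⟫ = -1 ∧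
      ⟪c.wWord ((L.drop (k + 1)).reverse) (c.simple m), coroot (c.simple (L.get k))⟫ = -1 := by
  intro k
  have hshortest : ∀ M, c.wWord M c.hishort = c.wWord L c.hishort → L.length ≤ M.length :=
    fun M hM => hred ▸ (hmin _ ⟨M, rfl⟩ (hM.trans hw)).trans (c.lenW_wWord_le_length M)
  have hone := c.inner_wWord_take_coroot_eq_one hred hshortest hlen.le k.isLt
  have hsucc : ⟪c.wWord (L.take (k + 1)) c.hishort, coroot (c.simple (L.get k))⟫ = -1 := by
    rw [List.get_eq_getElem, wWord_take_succ _ _ k.isLt, Function.comp_apply,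
      inner_srefl_coroot (c.simple_ne_zero _), hone]
  refine ⟨hsucc, ?_⟩
  rwa [← hw, wWord_reverse_drop_wWord]

open RootCtx in
/-- formula (1.33).  Let α_m be a short simple root and w the unique
element of minimal length (l(s_ϑ)−1)/2 with w(ϑ) = α_m, with a reduced word
L = [j_1,…,j_p] (letters in order of application).  Then for every k,
(s_{j_k}⋯s_{j_1}(ϑ), α_{j_k}^∨) = −1; equivalently (s_{j_{k+1}}⋯s_{j_p}(α_m), α_{j_k}^∨) = −1. -/
theorem minimal_word_pairing_neg_one {n : ℕ} (c : RootCtx n)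
    (m : Fin n) (hm : ⟪c.simple m, c.simple m⟫ = 2)
    (L : List (Fin n))
    (hw : c.wWord L c.hishort = c.simple m)
    (hred : L.length = c.lenW (c.wWord L))
    (hlen : 2 * L.length + 1 = c.lenW (srefl c.hishort))
    (hmin : ∀ v, c.IsWeyl v → v c.hishort = c.simple m →
      c.lenW (c.wWord L) ≤ c.lenW v) :
    ∀ k : Fin L.length,
      ⟪c.wWord (L.take (k + 1)) c.hishort, coroot (c.simple (L.get k))⟫ = -1 ∧
      ⟪c.wWord ((L.drop (k + 1)).reverse) (c.simple m), coroot (c.simple (L.get k))⟫ = -1 :=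
  minimal_word_pairing_neg_one_general c m L hw hred hlen hmin
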